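/- arXiv:2509.24977 — 2 statements merged into one kernel-verified Lean document; each statement's English description precedes it below -/
import Mathlib

section
/- Let G(x; m, v) = (2πv)^(−1/2)·exp(−(x − m)²/(2v)) for v > 0. Let k > 0, D > 0, μ ∈ ℝ and s < t < T. Define m(Δ, w) = μ + (w − μ)e^(−kΔ) and v(Δ) = D²(1 − e^(−2kΔ))/(2k) for Δ > 0. Then for all x, y, z ∈ ℝ: G(x; m(t−s, y), v(t−s))·G(z; m(T−t, x), v(T−t)) / G(z; m(T−s, y), v(T−s)) = G(x; μ_B, σ_B²), where μ_B = μ + [(y − μ)·sinh(k(T−t)) + (z − μ)·sinh(k(t−s))]/sinh(k(T−s)) and σ_B² = (D²/k)·sinh(k(T−t))·sinh(k(t−s))/sinh(k(T−s)). -/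
/-!
Over a step of rescaled length `a`, the OU transition is the linear Gaussian model
`N(μ + (w - μ)e^{-a}, c(1 - e^{-2a}))`, so the bridge propagator is the conditional law of `X_t`
given a linear Gaussian observation `X_T` of it. Completing the square in `x` gives the posterior
mean and variance, and writing `sinh a = (1 - e^{-2a}) / (2e^{-a})` turns them into the
hyperbolic-sine formulas.
-/

open Real

noncomputable def gaussian (x m v : ℝ) : ℝ :=
  (2 * π * v) ^ (-(1 : ℝ) / 2) * exp (-(x - m) ^ 2 / (2 * v))

theorem gaussian_mul_gaussian_div_gaussian {p q : ℝ} (hp : 0 < p) (hq : 0 < q)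
    (x z m c d : ℝ) :
    gaussian x m p * gaussian z (c + d * x) q / gaussian z (c + d * m) (q + d ^ 2 * p) =
      gaussian x (m + d * p * (z - (c + d * m)) / (q + d ^ 2 * p)) (p * q / (q + d ^ 2 * p)) := by
  have hnorm : (2 * π * p) ^ (-(1 : ℝ) / 2) * (2 * π * q) ^ (-(1 : ℝ) / 2) /
      (2 * π * (q + d ^ 2 * p)) ^ (-(1 : ℝ) / 2) =
      (2 * π * (p * q / (q + d ^ 2 * p))) ^ (-(1 : ℝ) / 2) := by
    rw [← mul_rpow (by positivity) (by positivity), ← div_rpow (by positivity) (by positivity)]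
    congr 1
    field_simp
  have hexp : -(x - m) ^ 2 / (2 * p) + -(z - (c + d * x)) ^ 2 / (2 * q) -
      -(z - (c + d * m)) ^ 2 / (2 * (q + d ^ 2 * p)) =
      -(x - (m + d * p * (z - (c + d * m)) / (q + d ^ 2 * p))) ^ 2 /
        (2 * (p * q / (q + d ^ 2 * p))) := by
    field_simp
    ring
  unfold gaussian
  rw [← hnorm, ← hexp, exp_sub, exp_add]
  ring

theorem Real.sinh_eq_one_sub_exp_neg_sq_div (a : ℝ) :
    sinh a = (1 - exp (-a) ^ 2) / (2 * exp (-a)) := by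
  rw [sinh_eq, exp_neg]
  field_simp

theorem Real.one_sub_exp_neg_sq_pos {a : ℝ} (ha : 0 < a) : 0 < 1 - exp (-a) ^ 2 :=
  sub_pos.mpr (pow_lt_one₀ (exp_pos _).le (exp_lt_one_iff.mpr (neg_lt_zero.mpr ha)) two_ne_zero)

theorem gaussian_ou_bridge {a b c : ℝ} (ha : 0 < a) (hb : 0 < b) (hc : 0 < c) (μ x y z : ℝ) :
    gaussian x (μ + (y - μ) * exp (-a)) (c * (1 - exp (-a) ^ 2)) *
        gaussian z (μ + (x - μ) * exp (-b)) (c * (1 - exp (-b) ^ 2)) /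
        gaussian z (μ + (y - μ) * exp (-(a + b))) (c * (1 - exp (-(a + b)) ^ 2)) =
      gaussian x (μ + ((y - μ) * sinh b + (z - μ) * sinh a) / sinh (a + b))
        (2 * c * sinh b * sinh a / sinh (a + b)) := by
  have hAB : exp (-(a + b)) = exp (-a) * exp (-b) := by rw [neg_add, exp_add]
  -- written in the atom order `field_simp` normalises the denominator `1 - (A * B) ^ 2` to
  have hden : 1 - exp (-b) ^ 2 * exp (-a) ^ 2 ≠ 0 := by
    rw [← mul_pow, mul_comm, ← hAB]; exact (one_sub_exp_neg_sq_pos (by linarith)).ne'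
  rw [sinh_eq_one_sub_exp_neg_sq_div a, sinh_eq_one_sub_exp_neg_sq_div b,
    sinh_eq_one_sub_exp_neg_sq_div (a + b), hAB]
  set A := exp (-a)
  set B := exp (-b)
  set p := c * (1 - A ^ 2) with hp_def
  set q := c * (1 - B ^ 2) with hq_def
  have hp : 0 < p := mul_pos hc (one_sub_exp_neg_sq_pos ha)
  have hq : 0 < q := mul_pos hc (one_sub_exp_neg_sq_pos hb)
  have hA0 : 0 < A := exp_pos _
  have hB0 : 0 < B := exp_pos _
  have hr : c * (1 - (A * B) ^ 2) = q + B ^ 2 * p := by ring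
  have hmean : μ + ((y - μ) * ((1 - B ^ 2) / (2 * B)) + (z - μ) * ((1 - A ^ 2) / (2 * A))) /
      ((1 - (A * B) ^ 2) / (2 * (A * B))) =
        μ + (y - μ) * A + B * p * (z - (μ - μ * B + B * (μ + (y - μ) * A))) / (q + B ^ 2 * p) := by
    rw [← hr, add_assoc]
    congr 1
    field_simp
    ring
  have hvar : 2 * c * ((1 - B ^ 2) / (2 * B)) * ((1 - A ^ 2) / (2 * A)) /
      ((1 - (A * B) ^ 2) / (2 * (A * B))) = p * q / (q + B ^ 2 * p) := by
    rw [← hr, hp_def, hq_def]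
    field_simp
  rw [hr, hmean, hvar, show μ + (x - μ) * B = μ - μ * B + B * x by ring,
    show μ + (y - μ) * (A * B) = μ - μ * B + B * (μ + (y - μ) * A) by ring]
  exact gaussian_mul_gaussian_div_gaussian hp hq x z _ _ _

/-- The Ornstein–Uhlenbeck bridge propagator. With Gaussian densities
`G(x; m, v) = (2πv)^(−1/2)·exp(−(x − m)²/(2v))` and OU transition densities of mean
`m(Δ, w) = μ + (w − μ)e^(−kΔ)` and variance `v(Δ) = D²(1 − e^(−2kΔ))/(2k)`, the pinned
(bridge) propagator is the Gaussian with the stated hyperbolic-sine mean and variance. -/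
theorem ou_bridge_propagator
    (G : ℝ → ℝ → ℝ → ℝ)
    (hG : ∀ x m v : ℝ, 0 < v →
      G x m v = (2 * Real.pi * v) ^ (-(1 : ℝ) / 2) * Real.exp (-(x - m) ^ 2 / (2 * v)))
    (k D μ s t T : ℝ) (hk : 0 < k) (hD : 0 < D) (hst : s < t) (htT : t < T)
    (m : ℝ → ℝ → ℝ) (v : ℝ → ℝ)
    (hm : ∀ Δ w : ℝ, 0 < Δ → m Δ w = μ + (w - μ) * Real.exp (-k * Δ))
    (hv : ∀ Δ : ℝ, 0 < Δ → v Δ = D ^ 2 * (1 - Real.exp (-2 * k * Δ)) / (2 * k)) :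
    ∀ x y z : ℝ,
      G x (m (t - s) y) (v (t - s)) * G z (m (T - t) x) (v (T - t)) /
          G z (m (T - s) y) (v (T - s)) =
        G x (μ + ((y - μ) * Real.sinh (k * (T - t)) + (z - μ) * Real.sinh (k * (t - s))) /
              Real.sinh (k * (T - s)))
          ((D ^ 2 / k) * Real.sinh (k * (T - t)) * Real.sinh (k * (t - s)) /
            Real.sinh (k * (T - s))) := by
  intro x y z
  have ha : 0 < k * (t - s) := mul_pos hk (sub_pos.mpr hst)
  have hb : 0 < k * (T - t) := mul_pos hk (sub_pos.mpr htT)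
  have hc : 0 < D ^ 2 / (2 * k) := by positivity
  have hsplit : T - s = (t - s) + (T - t) := by ring
  have hm' (Δ w : ℝ) (hΔ : 0 < Δ) : m Δ w = μ + (w - μ) * exp (-(k * Δ)) := by
    rw [hm Δ w hΔ, neg_mul]
  have hv' (Δ : ℝ) (hΔ : 0 < Δ) : v Δ = D ^ 2 / (2 * k) * (1 - exp (-(k * Δ)) ^ 2) := by
    rw [hv Δ hΔ, ← exp_nat_mul]
    ring_nf
  have hG' (x m v : ℝ) (hv : 0 < v) : G x m v = gaussian x m v := hG x m v hv
  rw [hm' _ _ (by linarith), hm' _ _ (by linarith), hm' _ _ (by linarith),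
    hv' _ (by linarith), hv' _ (by linarith), hv' _ (by linarith), hsplit, mul_add,
    hG' _ _ _ (mul_pos hc (one_sub_exp_neg_sq_pos ha)),
    hG' _ _ _ (mul_pos hc (one_sub_exp_neg_sq_pos hb)),
    hG' _ _ _ (mul_pos hc (one_sub_exp_neg_sq_pos (add_pos ha hb))),
    hG' _ _ _ (by positivity), gaussian_ou_bridge ha hb hc]
  congr 1
  field_simp
end

section
/- Let k > 0, D > 0 and μ, y ∈ ℝ. Define p(t, x) = (2πv(t))^(−1/2)·exp(−(x − m(t))²/(2v(t))) for t > 0 and x ∈ ℝ, where m(t) = μ + (y − μ)e^(−kt) and v(t) = D²(1 − e^(−2kt))/(2k). Then p satisfies the Fokker–Planck equation of the Ornstein–Uhlenbeck process: for every t > 0 and x ∈ ℝ, ∂_t p(t, x) = −∂_x[k(μ − x)·p(t, x)] + (D²/2)·∂²_x p(t, x). -/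
/-!
A Gaussian whose mean `m` and variance `v` move in time satisfies
`∂ₜ g = -m' ∂ₓ g + (v'/2) ∂ₓ² g`: moving the mean is transport, and raising the variance is the
heat equation. The Ornstein–Uhlenbeck moments obey `m' = k (μ - m)` and `v' = D² - 2 k v`, so the
Fokker–Planck equation reduces to `v ∂ₓ² g + (x - m) ∂ₓ g + g = 0`, which holds because
`v ∂ₓ g = -(x - m) g`.
-/

open Real Filter Topology

/-- Unlike `ProbabilityTheory.gaussianPDFReal`, the variance is a real parameter, so that it can be
differentiated. -/
noncomputable def gaussianDensity (m v x : ℝ) : ℝ :=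
  (2 * π * v) ^ (-(1 : ℝ) / 2) * exp (-(x - m) ^ 2 / (2 * v))

noncomputable def ouMean (k μ y t : ℝ) : ℝ := μ + (y - μ) * exp (-k * t)

noncomputable def ouVariance (k D t : ℝ) : ℝ := D ^ 2 * (1 - exp (-2 * k * t)) / (2 * k)

theorem hasDerivAt_ouMean (k μ y t : ℝ) :
    HasDerivAt (ouMean k μ y) (k * (μ - ouMean k μ y t)) t := by
  refine ((((hasDerivAt_id' t).const_mul (-k)).exp.const_mul (y - μ)).const_add μ).congr_deriv ?_
  unfold ouMean
  ring

theorem hasDerivAt_ouVariance {k : ℝ} (hk : k ≠ 0) (D t : ℝ) :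
    HasDerivAt (ouVariance k D) (D ^ 2 - 2 * k * ouVariance k D t) t := by
  refine ((((hasDerivAt_id' t).const_mul (-2 * k)).exp.const_sub 1).const_mul (D ^ 2)).div_const
    (2 * k) |>.congr_deriv ?_
  unfold ouVariance
  field_simp
  ring

theorem ouVariance_pos {k D t : ℝ} (hk : 0 < k) (hD : D ≠ 0) (ht : 0 < t) :
    0 < ouVariance k D t := by
  have : 0 < 1 - exp (-2 * k * t) := sub_pos.mpr (Real.exp_lt_one_iff.mpr (by nlinarith))
  unfold ouVariance
  positivity

theorem hasDerivAt_gaussianDensity (m v x : ℝ) :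
    HasDerivAt (gaussianDensity m v) (-(x - m) / v * gaussianDensity m v x) x := by
  refine ((((hasDerivAt_id' x).sub_const m).fun_pow 2).fun_neg.div_const (2 * v)).exp.const_mul
    ((2 * π * v) ^ (-(1 : ℝ) / 2)) |>.congr_deriv ?_
  unfold gaussianDensity
  push_cast
  ring

theorem deriv_gaussianDensity (m v : ℝ) :
    deriv (gaussianDensity m v) = fun x => -(x - m) / v * gaussianDensity m v x :=
  funext fun x => (hasDerivAt_gaussianDensity m v x).deriv

theorem deriv_deriv_gaussianDensity (m v x : ℝ) :
    deriv (deriv (gaussianDensity m v)) x =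
      ((x - m) ^ 2 / v ^ 2 - 1 / v) * gaussianDensity m v x := by
  rw [deriv_gaussianDensity]
  refine ((((hasDerivAt_id' x).sub_const m).fun_neg.div_const v).fun_mul
    (hasDerivAt_gaussianDensity m v x)).deriv.trans ?_
  ring

theorem hasDerivAt_gaussianDensity_comp {m v : ℝ → ℝ} {m' v' t : ℝ} (x : ℝ)
    (hm : HasDerivAt m m' t) (hv : HasDerivAt v v' t) (hv0 : v t ≠ 0) :
    HasDerivAt (fun s => gaussianDensity (m s) (v s) x)
      (-m' * deriv (gaussianDensity (m t) (v t)) x +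
        v' / 2 * deriv (deriv (gaussianDensity (m t) (v t))) x) t := by
  have h2πv : 2 * π * v t ≠ 0 := by positivity
  have hnorm := (hv.const_mul (2 * π)).rpow_const (p := -(1 : ℝ) / 2) (.inl h2πv)
  have hexp := ((((hasDerivAt_const t x).fun_sub hm).fun_pow 2).fun_neg.fun_div (hv.const_mul 2)
    (by positivity)).exp
  refine (hnorm.fun_mul hexp).congr_deriv ?_
  rw [deriv_deriv_gaussianDensity, deriv_gaussianDensity, rpow_sub_one h2πv]
  unfold gaussianDensity
  push_cast
  field_simp
  ring

/-- The Gaussian propagator of the Ornstein–Uhlenbeck process, with mean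
`m(t) = μ + (y − μ)e^(−kt)` and variance `v(t) = D²(1 − e^(−2kt))/(2k)`, satisfies the
Fokker–Planck equation `∂_t p = −∂_x[k(μ − x)p] + (D²/2)∂²_x p` for all `t > 0`, `x ∈ ℝ`. -/
theorem ou_propagator_fokker_planck
    (k D μ y : ℝ) (hk : 0 < k) (hD : 0 < D)
    (m v : ℝ → ℝ)
    (hm : ∀ t : ℝ, m t = μ + (y - μ) * Real.exp (-k * t))
    (hv : ∀ t : ℝ, v t = D ^ 2 * (1 - Real.exp (-2 * k * t)) / (2 * k))
    (p : ℝ → ℝ → ℝ)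
    (hp : ∀ t x : ℝ, 0 < t →
      p t x = (2 * Real.pi * v t) ^ (-(1 : ℝ) / 2) *
        Real.exp (-(x - m t) ^ 2 / (2 * v t))) :
    ∀ t > 0, ∀ x : ℝ,
      deriv (fun s => p s x) t =
        - deriv (fun w => k * (μ - w) * p t w) x +
          (D ^ 2 / 2) * deriv (deriv (fun w => p t w)) x := by
  intro t ht x
  obtain rfl : m = ouMean k μ y := funext hm
  obtain rfl : v = ouVariance k D := funext hv
  have hV : 0 < ouVariance k D t := ouVariance_pos hk hD.ne' ht
  have hp_time : (fun s => p s x) =ᶠ[𝓝 t]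
      fun s => gaussianDensity (ouMean k μ y s) (ouVariance k D s) x :=
    (eventually_gt_nhds ht).mono fun s hs => hp s x hs
  have hp_space (w : ℝ) : p t w = gaussianDensity (ouMean k μ y t) (ouVariance k D t) w :=
    hp t w ht
  have hdrift := (((hasDerivAt_id' x).const_sub μ).const_mul k).fun_mul
    (hasDerivAt_gaussianDensity (ouMean k μ y t) (ouVariance k D t) x)
  rw [hp_time.deriv_eq, (hasDerivAt_gaussianDensity_comp x (hasDerivAt_ouMean k μ y t)
    (hasDerivAt_ouVariance hk.ne' D t) hV.ne').deriv]
  simp only [hp_space]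
  rw [hdrift.deriv, deriv_deriv_gaussianDensity, deriv_gaussianDensity]
  field_simp
  ring
end
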